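/- If the DM-TWC satisfies condition (a) and condition (b1), then C_I = C_O. -/

import Mathlib

/-!
Under (a), replacing each conditional input P_{X₁|X₂=x₂} of a joint input by the common optimal
input P* does not lower I(X₁;Y₂|X₂). Under (b1), I(X₂;Y₁|X₁) is the average over P_{X₁} of
𝓘(P_{X₂|X₁=x₁}, W₁(x₀, ·)) for one fixed x₀, so by concavity of 𝓘 in the input it is at most
𝓘(P_{X₂}, W₁(x₀, ·)), its value at the product input P*·P_{X₂}. Hence C_O is the union over
distributions Q on 𝒳₂ of the rectangles [0, Σ Q(x₂) 𝓘(P*, W₂(·, x₂))] × [0, 𝓘(Q, W₁(x₀, ·))],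
all of which come from product inputs. The first side is linear and the second concave and
continuous in Q, so this union is convex and closed, and therefore contains C_I as well.
-/

open scoped BigOperators

/-- `P` is a probability distribution on the finite alphabet `A`. -/
def IsDist {A : Type*} [Fintype A] (P : A → ℝ) : Prop :=
  (∀ a, 0 ≤ P a) ∧ ∑ a, P a = 1

/-- Input–output mutual information 𝓘(P, W) (in bits) of a channel `W`
from the finite alphabet `A` to the finite alphabet `B` under input distribution `P`. -/
noncomputable def mutInfo {A B : Type*} [Fintype A] [Fintype B]
    (P : A → ℝ) (W : A → B → ℝ) : ℝ :=
  ∑ a, ∑ b, P a * W a b * Real.logb 2 (W a b / ∑ a', P a' * W a' b)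

/-- Shannon entropy (base 2) of a distribution on a finite alphabet. -/
noncomputable def ent {B : Type*} [Fintype B] (Q : B → ℝ) : ℝ :=
  -∑ b, Q b * Real.logb 2 (Q b)

section TWC

variable {X1 X2 Y1 Y2 : Type*} [Fintype X1] [Fintype X2] [Fintype Y1] [Fintype Y2]

/-- A joint input distribution on `X1 × X2`. -/
def IsJointDist (P : X1 → X2 → ℝ) : Prop :=
  (∀ x1 x2, 0 ≤ P x1 x2) ∧ ∑ x1, ∑ x2, P x1 x2 = 1

/-- Marginal of a joint input distribution on `X1`. -/
noncomputable def margin1 (P : X1 → X2 → ℝ) (x1 : X1) : ℝ := ∑ x2, P x1 x2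

/-- Marginal of a joint input distribution on `X2`. -/
noncomputable def margin2 (P : X1 → X2 → ℝ) (x2 : X2) : ℝ := ∑ x1, P x1 x2

/-- Conditional distribution P_{X₁|X₂=x₂}. -/
noncomputable def cond1given2 (P : X1 → X2 → ℝ) (x2 : X2) (x1 : X1) : ℝ :=
  P x1 x2 / margin2 P x2

/-- Conditional distribution P_{X₂|X₁=x₁}. -/
noncomputable def cond2given1 (P : X1 → X2 → ℝ) (x1 : X1) (x2 : X2) : ℝ :=
  P x1 x2 / margin1 P x1

/-- The conditional mutual information I(X₁;Y₂|X₂) under the joint input distribution `P`,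
where `W2` is the marginal channel P_{Y₂|X₁,X₂}. -/
noncomputable def condMI12 (P : X1 → X2 → ℝ) (W2 : X1 → X2 → Y2 → ℝ) : ℝ :=
  ∑ x2, margin2 P x2 * mutInfo (cond1given2 P x2) (fun x1 => W2 x1 x2)

/-- The conditional mutual information I(X₂;Y₁|X₁) under the joint input distribution `P`,
where `W1` is the marginal channel P_{Y₁|X₁,X₂}. -/
noncomputable def condMI21 (P : X1 → X2 → ℝ) (W1 : X1 → X2 → Y1 → ℝ) : ℝ :=
  ∑ x1, margin1 P x1 * mutInfo (cond2given1 P x1) (fun x2 => W1 x1 x2)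

/-- The rate region 𝓡(P_{X₁,X₂}). -/
noncomputable def rateRegion (W1 : X1 → X2 → Y1 → ℝ) (W2 : X1 → X2 → Y2 → ℝ)
    (P : X1 → X2 → ℝ) : Set (ℝ × ℝ) :=
  {r | 0 ≤ r.1 ∧ r.1 ≤ condMI12 P W2 ∧ 0 ≤ r.2 ∧ r.2 ≤ condMI21 P W1}

/-- Shannon's inner bound C_I: the closure of the convex hull of the union of the
rate regions of all product input distributions. -/
noncomputable def innerBound (W1 : X1 → X2 → Y1 → ℝ) (W2 : X1 → X2 → Y2 → ℝ) :
    Set (ℝ × ℝ) :=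
  closure (convexHull ℝ
    (⋃ P ∈ {P : X1 → X2 → ℝ |
        ∃ P1 P2, IsDist P1 ∧ IsDist P2 ∧ P = fun x1 x2 => P1 x1 * P2 x2},
      rateRegion W1 W2 P))

/-- Shannon's outer bound C_O: the union of the rate regions of all joint input
distributions. -/
noncomputable def outerBound (W1 : X1 → X2 → Y1 → ℝ) (W2 : X1 → X2 → Y2 → ℝ) :
    Set (ℝ × ℝ) :=
  ⋃ P ∈ {P : X1 → X2 → ℝ | IsJointDist P}, rateRegion W1 W2 P

/-- The largest input–output mutual information of the one-way channel
P_{Y₂|X₁,X₂=x₂}. -/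
noncomputable def capAt (W2 : X1 → X2 → Y2 → ℝ) (x2 : X2) : ℝ :=
  sSup {I | ∃ P : X1 → ℝ, IsDist P ∧ I = mutInfo P (fun x1 => W2 x1 x2)}

/-- α*: how close the channels {P_{Y₂|X₁,X₂=x₂}} are to having a common optimal
input distribution. -/
noncomputable def alphaStar (W2 : X1 → X2 → Y2 → ℝ) : ℝ :=
  sInf {a | ∃ Pt : X1 → ℝ, IsDist Pt ∧
    a = ⨆ x2, |mutInfo Pt (fun x1 => W2 x1 x2) - capAt W2 x2|}

/-- β*: the degree of invariance in the input–output mutual information of the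
channels {P_{Y₁|X₁=x₁,X₂}}. -/
noncomputable def betaStar (W1 : X1 → X2 → Y1 → ℝ) : ℝ :=
  sSup {b | ∃ (P : X2 → ℝ) (x1 x1' : X1), IsDist P ∧ x1 ≠ x1' ∧
    b = |mutInfo P (fun x2 => W1 x1 x2) - mutInfo P (fun x2 => W1 x1' x2)|}

/-- I*₁ = max_{x₂} max_{P} 𝓘(P, P_{Y₂|X₁,X₂=x₂}). -/
noncomputable def IStar1 (W2 : X1 → X2 → Y2 → ℝ) : ℝ :=
  sSup {I | ∃ (x2 : X2) (P : X1 → ℝ), IsDist P ∧ I = mutInfo P (fun x1 => W2 x1 x2)}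

/-- I*₂ = max_{x₁} max_{P} 𝓘(P, P_{Y₁|X₁=x₁,X₂}). -/
noncomputable def IStar2 (W1 : X1 → X2 → Y1 → ℝ) : ℝ :=
  sSup {I | ∃ (x1 : X1) (P : X2 → ℝ), IsDist P ∧ I = mutInfo P (fun x2 => W1 x1 x2)}

/-- Condition (a): `Pstar` is a common optimal input distribution for the channels
{P_{Y₂|X₁,X₂=x₂} : x₂ ∈ 𝒳₂}. -/
def CondA (W2 : X1 → X2 → Y2 → ℝ) (Pstar : X1 → ℝ) : Prop :=
  IsDist Pstar ∧ ∀ x2 : X2, ∀ P : X1 → ℝ, IsDist P →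
    mutInfo P (fun x1 => W2 x1 x2) ≤ mutInfo Pstar (fun x1 => W2 x1 x2)

/-- Condition (b1): for every input distribution on 𝒳₂, the input–output mutual
information of P_{Y₁|X₁=x₁,X₂} does not depend on x₁. -/
def CondB1 (W1 : X1 → X2 → Y1 → ℝ) : Prop :=
  ∀ P : X2 → ℝ, IsDist P → ∀ x1 x1' : X1,
    mutInfo P (fun x2 => W1 x1 x2) = mutInfo P (fun x2 => W1 x1' x2)

/-- H(Y₁|X₁,X₂) under the joint input distribution `P`. -/
noncomputable def condEntFull (P : X1 → X2 → ℝ) (W1 : X1 → X2 → Y1 → ℝ) : ℝ :=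
  ∑ x1, ∑ x2, P x1 x2 * ent (W1 x1 x2)

/-- H(Y₁|X₁) under the joint input distribution `P`. -/
noncomputable def condEntY1X1 (P : X1 → X2 → ℝ) (W1 : X1 → X2 → Y1 → ℝ) : ℝ :=
  ∑ x1, margin1 P x1 * ent (fun y1 => ∑ x2, cond2given1 P x1 x2 * W1 x1 x2 y1)

/-- Condition (b2), part (i): H(Y₁|X₁,X₂) depends on the joint input distribution
only through its marginal on 𝒳₂. -/
def CondB2i (W1 : X1 → X2 → Y1 → ℝ) : Prop :=
  ∀ P Q : X1 → X2 → ℝ, IsJointDist P → IsJointDist Q →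
    margin2 P = margin2 Q → condEntFull P W1 = condEntFull Q W1

/-- Condition (b2), part (ii), relative to the common optimal input `Pstar`:
H⁽¹⁾(Y₁|X₁) ≤ H⁽²⁾(Y₁|X₁) where P⁽²⁾ = P*_{X₁}·P⁽¹⁾_{X₂}. -/
def CondB2ii (W1 : X1 → X2 → Y1 → ℝ) (Pstar : X1 → ℝ) : Prop :=
  ∀ P : X1 → X2 → ℝ, IsJointDist P →
    condEntY1X1 P W1 ≤ condEntY1X1 (fun x1 x2 => Pstar x1 * margin2 P x2) W1

end TWC

open Set

lemma ent_eq_sum_negMulLog {B : Type*} [Fintype B] (Q : B → ℝ) :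
    ent Q = ∑ b, Real.negMulLog (Q b) / Real.log 2 := by
  rw [ent, ← Finset.sum_neg_distrib]
  refine Finset.sum_congr rfl fun b _ => ?_
  rw [Real.negMulLog, Real.logb]
  ring

lemma concaveOn_ent {B : Type*} [Fintype B] : ConcaveOn ℝ (Ici 0) (ent : (B → ℝ) → ℝ) := by
  refine ⟨convex_Ici 0, fun Q hQ Q' hQ' a b ha hb hab => ?_⟩
  simp only [ent_eq_sum_negMulLog, smul_eq_mul, Finset.mul_sum, ← Finset.sum_add_distrib,
    Pi.add_apply, Pi.smul_apply]
  refine Finset.sum_le_sum fun y _ => ?_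
  have hlog : 0 < Real.log 2 := Real.log_pos one_lt_two
  have := Real.concaveOn_negMulLog.2 (hQ y) (hQ' y) ha hb hab
  simp only [smul_eq_mul] at this
  rw [mul_div_assoc', mul_div_assoc', ← add_div]
  exact div_le_div_of_nonneg_right this hlog.le

section MutualInformation

variable {A B : Type*} [Fintype A]

noncomputable def outputDist (P : A → ℝ) (W : A → B → ℝ) (b : B) : ℝ := ∑ a, P a * W a b

lemma outputDist_nonneg {P : A → ℝ} {W : A → B → ℝ} (hP : 0 ≤ P) (hW : ∀ a, 0 ≤ W a) :
    0 ≤ outputDist P W :=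
  fun b => Finset.sum_nonneg fun a _ => mul_nonneg (hP a) (hW a b)

lemma outputDist_add_smul (P P' : A → ℝ) (W : A → B → ℝ) (a b : ℝ) :
    outputDist (a • P + b • P') W = a • outputDist P W + b • outputDist P' W := by
  ext y
  simp only [outputDist, Pi.add_apply, Pi.smul_apply, smul_eq_mul, add_mul,
    Finset.sum_add_distrib, Finset.mul_sum, mul_assoc]

theorem mutInfo_eq_ent_sub [Fintype B] {P : A → ℝ} {W : A → B → ℝ} (hP : 0 ≤ P)
    (hW : ∀ a, 0 ≤ W a) :
    mutInfo P W = ent (outputDist P W) - ∑ a, P a * ent (W a) := by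
  have key : ∀ a b, P a * W a b * Real.logb 2 (W a b / outputDist P W b)
      = P a * W a b * Real.logb 2 (W a b) - P a * W a b * Real.logb 2 (outputDist P W b) := by
    intro a b
    rcases (mul_nonneg (hP a) (hW a b)).eq_or_lt with h | h
    · simp [← h]
    · have hWab : W a b ≠ 0 := right_ne_zero_of_mul h.ne'
      have hout : 0 < outputDist P W b := h.trans_le <|
        Finset.single_le_sum (f := fun a' => P a' * W a' b)
          (fun a' _ => mul_nonneg (hP a') (hW a' b)) (Finset.mem_univ a)
      rw [Real.logb_div hWab hout.ne', mul_sub]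
  simp only [mutInfo, ent, outputDist] at key ⊢
  simp only [key, Finset.sum_sub_distrib, Finset.mul_sum, Finset.sum_mul, mul_neg,
    Finset.sum_neg_distrib, mul_assoc]
  rw [Finset.sum_comm (f := fun a b => P a * (W a b * Real.logb 2 (∑ a', P a' * W a' b)))]
  ring

theorem concaveOn_mutInfo [Fintype B] {W : A → B → ℝ} (hW : ∀ a, 0 ≤ W a) :
    ConcaveOn ℝ (Ici 0) (fun P : A → ℝ => mutInfo P W) := by
  refine ⟨convex_Ici 0, fun P hP P' hP' a b ha hb hab => ?_⟩
  have hmix : a • P + b • P' ∈ Ici 0 := convex_Ici 0 hP hP' ha hb hab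
  have hent := concaveOn_ent.2 (outputDist_nonneg hP hW) (outputDist_nonneg hP' hW) ha hb hab
  simp only [mutInfo_eq_ent_sub hP hW, mutInfo_eq_ent_sub hP' hW, mutInfo_eq_ent_sub hmix hW,
    outputDist_add_smul, smul_eq_mul] at hent ⊢
  have hlin : ∑ x, (a • P + b • P') x * ent (W x)
      = a * ∑ x, P x * ent (W x) + b * ∑ x, P' x * ent (W x) := by
    simp only [Pi.add_apply, Pi.smul_apply, smul_eq_mul, add_mul, Finset.sum_add_distrib,
      Finset.mul_sum, mul_assoc]
  rw [hlin]
  linarith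

theorem continuousOn_mutInfo [Fintype B] {W : A → B → ℝ} (hW : ∀ a, 0 ≤ W a) :
    ContinuousOn (fun P : A → ℝ => mutInfo P W) (Ici 0) := by
  refine ContinuousOn.congr (f := fun P => ent (outputDist P W) - ∑ a, P a * ent (W a))
    (Continuous.continuousOn ?_) fun P hP => mutInfo_eq_ent_sub hP hW
  simp only [ent_eq_sum_negMulLog, outputDist]
  fun_prop

end MutualInformation

section Rectangles

variable {E : Type*} {K : Set E} {f g : E → ℝ}

theorem ConcaveOn.convex_biUnion_Icc_prod_Icc [AddCommGroup E] [Module ℝ E]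
    (hf : ConcaveOn ℝ K f) (hg : ConcaveOn ℝ K g) :
    Convex ℝ (⋃ x ∈ K, Icc 0 (f x) ×ˢ Icc 0 (g x)) := by
  intro r hr s hs a b ha hb hab
  obtain ⟨x, hx, ⟨hr1, hr1'⟩, hr2, hr2'⟩ := mem_iUnion₂.1 hr
  obtain ⟨y, hy, ⟨hs1, hs1'⟩, hs2, hs2'⟩ := mem_iUnion₂.1 hs
  refine mem_iUnion₂.2 ⟨a • x + b • y, hf.1 hx hy ha hb hab, ⟨?_, ?_⟩, ?_, ?_⟩
  all_goals simp only [Prod.fst_add, Prod.snd_add, Prod.smul_fst, Prod.smul_snd, smul_eq_mul]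
  · positivity
  · calc a * r.1 + b * s.1 ≤ a * f x + b * f y := by gcongr
      _ ≤ f (a • x + b • y) := hf.2 hx hy ha hb hab
  · positivity
  · calc a * r.2 + b * s.2 ≤ a * g x + b * g y := by gcongr
      _ ≤ g (a • x + b • y) := hg.2 hx hy ha hb hab

theorem IsCompact.isClosed_biUnion_Icc_prod_Icc [TopologicalSpace E] [T2Space E]
    (hK : IsCompact K) (hf : ContinuousOn f K) (hg : ContinuousOn g K) :
    IsClosed (⋃ x ∈ K, Icc 0 (f x) ×ˢ Icc 0 (g x)) := by
  obtain ⟨M, hM⟩ := hK.bddAbove_image hf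
  obtain ⟨N, hN⟩ := hK.bddAbove_image hg
  have hfg : ContinuousOn (fun p : E × ℝ × ℝ => (f p.1, g p.1)) (Prod.fst ⁻¹' K) :=
    (hf.comp continuousOn_fst fun _ h => h).prodMk (hg.comp continuousOn_fst fun _ h => h)
  have hC : IsClosed (Prod.fst ⁻¹' K : Set (E × ℝ × ℝ)) := hK.isClosed.preimage continuous_fst
  set S : Set (E × ℝ × ℝ) :=
    {p ∈ Prod.fst ⁻¹' K | 0 ≤ p.2} ∩ {p ∈ Prod.fst ⁻¹' K | p.2 ≤ (f p.1, g p.1)}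
  have hS : IsCompact S := by
    refine (hK.prod (isCompact_Icc (a := (0 : ℝ × ℝ)) (b := (M, N)))).of_isClosed_subset
      ((hC.isClosed_le continuousOn_const continuous_snd.continuousOn).inter
        (hC.isClosed_le continuous_snd.continuousOn hfg)) ?_
    rintro p ⟨⟨hp, hp0⟩, -, hpfg⟩
    exact ⟨hp, hp0, hpfg.trans ⟨hM ⟨p.1, hp, rfl⟩, hN ⟨p.1, hp, rfl⟩⟩⟩
  convert (hS.image continuous_snd).isClosed using 1
  ext r
  simp only [Icc_prod_Icc, mem_iUnion₂, mem_image, S, mem_inter_iff, mem_preimage,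
    Prod.exists, mem_Icc]
  constructor
  · rintro ⟨x, hx, hr⟩
    exact ⟨x, r.1, r.2, ⟨⟨hx, hr.1⟩, hx, hr.2⟩, rfl⟩
  · rintro ⟨x, _, _, ⟨⟨hx, hr⟩, -, hr'⟩, rfl⟩
    exact ⟨x, hx, hr, hr'⟩

end Rectangles

section JointDistributions

variable {X1 X2 : Type*} {P : X1 → X2 → ℝ}

lemma IsJointDist.margin2_isDist [Fintype X1] [Fintype X2] (hP : IsJointDist P) :
    IsDist (margin2 P) :=
  ⟨fun x2 => Finset.sum_nonneg fun x1 _ => hP.1 x1 x2, by rw [← hP.2]; exact Finset.sum_comm⟩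

lemma cond1given2_isDist [Fintype X1] (hP : ∀ x1 x2, 0 ≤ P x1 x2) {x2 : X2}
    (h : margin2 P x2 ≠ 0) :
    IsDist (cond1given2 P x2) :=
  ⟨fun x1 => div_nonneg (hP x1 x2) (Finset.sum_nonneg fun x1' _ => hP x1' x2),
    by simp only [cond1given2, ← Finset.sum_div]; exact div_self h⟩

lemma cond2given1_nonneg [Fintype X2] (hP : ∀ x1 x2, 0 ≤ P x1 x2) (x1 : X1) :
    0 ≤ cond2given1 P x1 :=
  fun x2 => div_nonneg (hP x1 x2) (Finset.sum_nonneg fun x2' _ => hP x1 x2')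

lemma cond2given1_isDist [Fintype X2] (hP : ∀ x1 x2, 0 ≤ P x1 x2) {x1 : X1}
    (h : margin1 P x1 ≠ 0) : IsDist (cond2given1 P x1) :=
  ⟨cond2given1_nonneg hP x1, by simp only [cond2given1, ← Finset.sum_div]; exact div_self h⟩

-- Also when `margin1 P x1 = 0`: then the row `P x1` vanishes, and so does `cond2given1 P x1`.
lemma margin1_mul_cond2given1 [Fintype X2] (hP : ∀ x1 x2, 0 ≤ P x1 x2) (x1 : X1) (x2 : X2) :
    margin1 P x1 * cond2given1 P x1 x2 = P x1 x2 := by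
  rcases eq_or_ne (margin1 P x1) 0 with h | h
  · rw [h, zero_mul, ((Finset.sum_eq_zero_iff_of_nonneg fun x2' _ => hP x1 x2').1 h x2
      (Finset.mem_univ x2))]
  · exact mul_div_cancel₀ _ h

lemma IsDist.isJointDist_mul [Fintype X1] [Fintype X2] {P1 : X1 → ℝ} {P2 : X2 → ℝ}
    (hP1 : IsDist P1) (hP2 : IsDist P2) :
    IsJointDist (fun x1 x2 => P1 x1 * P2 x2) :=
  ⟨fun x1 x2 => mul_nonneg (hP1.1 x1) (hP2.1 x2), by
    simp only [← Finset.mul_sum, hP2.2, mul_one, hP1.2]⟩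

end JointDistributions

section ProductInputs

variable {X1 X2 Y1 Y2 : Type*} [Fintype X1] [Fintype X2] {P1 : X1 → ℝ} {P2 : X2 → ℝ}

lemma condMI12_mul [Fintype Y2] (W2 : X1 → X2 → Y2 → ℝ) (hP1 : ∑ x1, P1 x1 = 1) :
    condMI12 (fun x1 x2 => P1 x1 * P2 x2) W2
      = ∑ x2, P2 x2 * mutInfo P1 (fun x1 => W2 x1 x2) := by
  have hm : margin2 (fun x1 x2 => P1 x1 * P2 x2) = P2 := by
    funext x2; simp [margin2, ← Finset.sum_mul, hP1]
  refine Finset.sum_congr rfl fun x2 _ => ?_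
  rw [hm]
  rcases eq_or_ne (P2 x2) 0 with h | h
  · simp [h]
  · congr 2
    funext x1
    rw [cond1given2, hm, mul_div_cancel_right₀ _ h]

lemma condMI21_mul [Fintype Y1] (W1 : X1 → X2 → Y1 → ℝ) (hP2 : ∑ x2, P2 x2 = 1) :
    condMI21 (fun x1 x2 => P1 x1 * P2 x2) W1
      = ∑ x1, P1 x1 * mutInfo P2 (fun x2 => W1 x1 x2) := by
  have hm : margin1 (fun x1 x2 => P1 x1 * P2 x2) = P1 := by
    funext x1; simp [margin1, ← Finset.mul_sum, hP2]
  refine Finset.sum_congr rfl fun x1 _ => ?_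
  rw [hm]
  rcases eq_or_ne (P1 x1) 0 with h | h
  · simp [h]
  · congr 2
    funext x2
    rw [cond2given1, hm, mul_div_cancel_left₀ _ h]

lemma CondB1.condMI21_mul [Fintype Y1] {W1 : X1 → X2 → Y1 → ℝ} (hb1 : CondB1 W1)
    (hP1 : IsDist P1) (hP2 : IsDist P2) (x1 : X1) :
    condMI21 (fun x1 x2 => P1 x1 * P2 x2) W1 = mutInfo P2 (fun x2 => W1 x1 x2) := by
  simp only [_root_.condMI21_mul W1 hP2.2, hb1 P2 hP2 _ x1, ← Finset.sum_mul, hP1.2, one_mul]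

end ProductInputs

section Dominance

variable {X1 X2 Y1 Y2 : Type*} [Fintype X1] [Fintype X2] {P : X1 → X2 → ℝ}

lemma CondA.condMI12_le [Fintype Y2] {W2 : X1 → X2 → Y2 → ℝ} {Pstar : X1 → ℝ}
    (ha : CondA W2 Pstar) (hP : IsJointDist P) :
    condMI12 P W2 ≤ condMI12 (fun x1 x2 => Pstar x1 * margin2 P x2) W2 := by
  rw [condMI12_mul W2 ha.1.2]
  refine Finset.sum_le_sum fun x2 _ => ?_
  rcases eq_or_ne (margin2 P x2) 0 with h | h
  · rw [h, zero_mul, zero_mul]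
  · exact mul_le_mul_of_nonneg_left (ha.2 x2 _ (cond1given2_isDist hP.1 h))
      (hP.margin2_isDist.1 x2)

lemma CondB1.condMI21_le [Fintype Y1] {W1 : X1 → X2 → Y1 → ℝ} (hb1 : CondB1 W1)
    (hW1 : ∀ x1 x2, IsDist (W1 x1 x2)) (hP : IsJointDist P) (x1₀ : X1) :
    condMI21 P W1 ≤ mutInfo (margin2 P) (fun x2 => W1 x1₀ x2) := by
  have hmargin : ∑ x1, margin1 P x1 • cond2given1 P x1 = margin2 P := by
    ext x2
    simp only [Finset.sum_apply, Pi.smul_apply, smul_eq_mul, margin1_mul_cond2given1 hP.1]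
    rfl
  calc condMI21 P W1
      = ∑ x1, margin1 P x1 • mutInfo (cond2given1 P x1) (fun x2 => W1 x1₀ x2) := by
        refine Finset.sum_congr rfl fun x1 _ => ?_
        rcases eq_or_ne (margin1 P x1) 0 with h | h
        · simp [h]
        · rw [hb1 _ (cond2given1_isDist hP.1 h) x1 x1₀, smul_eq_mul]
    _ ≤ mutInfo (∑ x1, margin1 P x1 • cond2given1 P x1) (fun x2 => W1 x1₀ x2) :=
        (concaveOn_mutInfo fun x2 => (hW1 x1₀ x2).1).le_map_sum
          (fun x1 _ => Finset.sum_nonneg fun x2 _ => hP.1 x1 x2) hP.2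
          (fun x1 _ => cond2given1_nonneg hP.1 x1)
    _ = mutInfo (margin2 P) (fun x2 => W1 x1₀ x2) := by rw [hmargin]

end Dominance

section TWC

variable {X1 X2 Y1 Y2 : Type*} [Fintype X1] [Fintype X2] [Fintype Y1] [Fintype Y2]

lemma rateRegion_eq_Icc_prod_Icc (W1 : X1 → X2 → Y1 → ℝ) (W2 : X1 → X2 → Y2 → ℝ)
    (P : X1 → X2 → ℝ) :
    rateRegion W1 W2 P = Icc 0 (condMI12 P W2) ×ˢ Icc 0 (condMI21 P W1) := by
  ext r
  exact and_assoc.symm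

variable {W1 : X1 → X2 → Y1 → ℝ} {W2 : X1 → X2 → Y2 → ℝ} {Pstar : X1 → ℝ}

theorem rateRegion_subset_rateRegion_mul_margin2 [Nonempty X1]
    (hW1 : ∀ x1 x2, IsDist (W1 x1 x2)) (ha : CondA W2 Pstar) (hb1 : CondB1 W1)
    {P : X1 → X2 → ℝ} (hP : IsJointDist P) :
    rateRegion W1 W2 P ⊆ rateRegion W1 W2 (fun x1 x2 => Pstar x1 * margin2 P x2) := by
  obtain ⟨x1⟩ := ‹Nonempty X1›
  rintro r ⟨h1, h2, h3, h4⟩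
  refine ⟨h1, h2.trans (ha.condMI12_le hP), h3, ?_⟩
  rw [hb1.condMI21_mul ha.1 hP.margin2_isDist x1]
  exact h4.trans (hb1.condMI21_le hW1 hP x1)

theorem outerBound_eq_biUnion_Icc_prod_Icc (hW1 : ∀ x1 x2, IsDist (W1 x1 x2))
    (ha : CondA W2 Pstar) (hb1 : CondB1 W1) (x1 : X1) :
    outerBound W1 W2 = ⋃ Q ∈ stdSimplex ℝ X2,
      Icc 0 (∑ x2, Q x2 * mutInfo Pstar (fun x1 => W2 x1 x2)) ×ˢ
        Icc 0 (mutInfo Q (fun x2 => W1 x1 x2)) := by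
  have hregion : ∀ Q ∈ stdSimplex ℝ X2, rateRegion W1 W2 (fun x1 x2 => Pstar x1 * Q x2) =
      Icc 0 (∑ x2, Q x2 * mutInfo Pstar (fun x1 => W2 x1 x2)) ×ˢ
        Icc 0 (mutInfo Q (fun x2 => W1 x1 x2)) := fun Q hQ => by
    rw [rateRegion_eq_Icc_prod_Icc, condMI12_mul W2 ha.1.2, hb1.condMI21_mul ha.1 hQ x1]
  refine subset_antisymm ?_ (iUnion₂_subset fun Q hQ => ?_)
  · intro r hr
    obtain ⟨P, hP, hr⟩ := mem_iUnion₂.1 hr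
    have : Nonempty X1 := ⟨x1⟩
    exact mem_iUnion₂.2 ⟨margin2 P, hP.margin2_isDist,
      hregion _ hP.margin2_isDist ▸ rateRegion_subset_rateRegion_mul_margin2 hW1 ha hb1 hP hr⟩
  · rw [← hregion Q hQ]
    exact subset_biUnion_of_mem (u := rateRegion W1 W2) (ha.1.isJointDist_mul hQ)

theorem convex_outerBound [Nonempty X1] (hW1 : ∀ x1 x2, IsDist (W1 x1 x2))
    (ha : CondA W2 Pstar) (hb1 : CondB1 W1) : Convex ℝ (outerBound W1 W2) := by
  obtain ⟨x1⟩ := ‹Nonempty X1›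
  rw [outerBound_eq_biUnion_Icc_prod_Icc hW1 ha hb1 x1]
  refine ConcaveOn.convex_biUnion_Icc_prod_Icc ?_
    ((concaveOn_mutInfo fun x2 => (hW1 x1 x2).1).subset (fun Q hQ => hQ.1)
      (convex_stdSimplex ℝ X2))
  exact ((Fintype.linearCombination ℝ fun x2 => mutInfo Pstar (fun x1 => W2 x1 x2)).concaveOn
    (convex_stdSimplex ℝ X2)).congr fun Q _ => by simp [Fintype.linearCombination_apply]

theorem isClosed_outerBound [Nonempty X1] (hW1 : ∀ x1 x2, IsDist (W1 x1 x2))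
    (ha : CondA W2 Pstar) (hb1 : CondB1 W1) : IsClosed (outerBound W1 W2) := by
  obtain ⟨x1⟩ := ‹Nonempty X1›
  rw [outerBound_eq_biUnion_Icc_prod_Icc hW1 ha hb1 x1]
  exact (isCompact_stdSimplex ℝ X2).isClosed_biUnion_Icc_prod_Icc (by fun_prop)
    ((continuousOn_mutInfo fun x2 => (hW1 x1 x2).1).mono fun Q hQ => hQ.1)

theorem innerBound_subset_outerBound (hconv : Convex ℝ (outerBound W1 W2))
    (hclosed : IsClosed (outerBound W1 W2)) : innerBound W1 W2 ⊆ outerBound W1 W2 := by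
  refine closure_minimal (convexHull_min (iUnion₂_subset ?_) hconv) hclosed
  rintro _ ⟨P1, P2, hP1, hP2, rfl⟩
  exact subset_biUnion_of_mem (u := rateRegion W1 W2) (hP1.isJointDist_mul hP2)

theorem outerBound_subset_innerBound [Nonempty X1] (hW1 : ∀ x1 x2, IsDist (W1 x1 x2))
    (ha : CondA W2 Pstar) (hb1 : CondB1 W1) : outerBound W1 W2 ⊆ innerBound W1 W2 := by
  intro r hr
  obtain ⟨P, hP, hr⟩ := mem_iUnion₂.1 hr
  exact subset_closure <| subset_convexHull ℝ _ <| mem_iUnion₂.2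
    ⟨_, ⟨Pstar, margin2 P, ha.1, hP.margin2_isDist, rfl⟩,
      rateRegion_subset_rateRegion_mul_margin2 hW1 ha hb1 hP hr⟩

theorem stmt8_general [Nonempty X1]
    (W1 : X1 → X2 → Y1 → ℝ) (W2 : X1 → X2 → Y2 → ℝ)
    (hW1 : ∀ x1 x2, IsDist (W1 x1 x2))
    (ha : ∃ Pstar : X1 → ℝ, CondA W2 Pstar) (hb1 : CondB1 W1) :
    innerBound W1 W2 = outerBound W1 W2 := by
  obtain ⟨Pstar, ha⟩ := ha
  exact (innerBound_subset_outerBound (convex_outerBound hW1 ha hb1)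
    (isClosed_outerBound hW1 ha hb1)).antisymm (outerBound_subset_innerBound hW1 ha hb1)

/-- if the DM-TWC satisfies conditions (a) and (b1), then C_I = C_O. -/
theorem stmt8 [Nonempty X1] [Nonempty X2]
    (W1 : X1 → X2 → Y1 → ℝ) (W2 : X1 → X2 → Y2 → ℝ)
    (hW1 : ∀ x1 x2, IsDist (W1 x1 x2)) (hW2 : ∀ x1 x2, IsDist (W2 x1 x2))
    (ha : ∃ Pstar : X1 → ℝ, CondA W2 Pstar) (hb1 : CondB1 W1) :
    innerBound W1 W2 = outerBound W1 W2 :=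
  stmt8_general W1 W2 hW1 ha hb1

end TWC
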